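/- The error between PageRank and its degree-based approximation admits the exact matrix representation π − π̄ = α(1−α) · D^{1/2} (I − αQ)^{-1} (Q − u₁u₁ᵀ) D^{-1/2} v (in particular I − αQ is invertible). -/

import Mathlib

open Matrix Finset

/-!
`I - αP` is invertible because it is strictly diagonally dominant along columns (`P` is
column-stochastic and `|α| < 1`). The similarity `Q = D^{-1/2} P D^{1/2}` carries `I - αQ` to
`I - αP` and `u₁u₁ᵀ` to `d𝟙ᵀ/vol(G)`. Since `P d = d`, applying `I - αP` to `π - π̄` gives
`α(1-α)(Pv - d/vol(G))`, and `d/vol(G) = (d𝟙ᵀ/vol(G)) v` because `𝟙ᵀv = 1`.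
-/

variable {ι : Type*} [Fintype ι] [DecidableEq ι]

namespace Matrix

theorem isUnit_one_sub_smul_of_mem_colStochastic {M : Matrix ι ι ℝ}
    (hM : M ∈ colStochastic ℝ ι) {α : ℝ} (hα : |α| < 1) : IsUnit (1 - α • M) := by
  rw [isUnit_iff_isUnit_det, isUnit_iff_ne_zero]
  refine det_ne_zero_of_sum_col_lt_diag fun k => ?_
  have hoff : ∀ i ∈ univ.erase k, ‖(1 - α • M) i k‖ = |α| * M i k := fun i hi => by
    rw [sub_apply, one_apply_ne (ne_of_mem_erase hi), smul_apply, smul_eq_mul, zero_sub,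
      norm_neg, Real.norm_eq_abs, abs_mul, abs_of_nonneg (nonneg_of_mem_colStochastic hM)]
  have hdiag : 1 - |α| * M k k ≤ |1 - α * M k k| := by
    have h := abs_sub_abs_le_abs_sub 1 (α * M k k)
    rwa [abs_one, abs_mul, abs_of_nonneg (nonneg_of_mem_colStochastic hM)] at h
  calc ∑ i ∈ univ.erase k, ‖(1 - α • M) i k‖ = |α| * (1 - M k k) := by
        rw [sum_congr rfl hoff, ← mul_sum, sum_erase_eq_sub (mem_univ k),
          sum_col_of_mem_colStochastic hM]
    _ < 1 - |α| * M k k := by nlinarith [le_one_of_mem_colStochastic hM (i := k) (j := k)]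
    _ ≤ ‖(1 - α • M) k k‖ := by
      rwa [sub_apply, one_apply_eq, smul_apply, smul_eq_mul, Real.norm_eq_abs]

section Conj

variable {R : Type*} [CommRing R] {S T : Matrix ι ι R}

theorem one_sub_smul_conj (hTS : T * S = 1) (α : R) (P : Matrix ι ι R) :
    1 - α • (T * P * S) = T * (1 - α • P) * S := by
  rw [Matrix.mul_sub, Matrix.sub_mul, Matrix.mul_one, hTS, Matrix.mul_smul, Matrix.smul_mul]

theorem isUnit_conj (hST : S * T = 1) (hTS : T * S = 1) {M : Matrix ι ι R} (hM : IsUnit M) :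
    IsUnit (T * M * S) :=
  ((Units.mk T S hTS hST).isUnit.mul hM).mul (Units.mk S T hST hTS).isUnit

theorem inv_conj (hST : S * T = 1) (hTS : T * S = 1) (M : Matrix ι ι R) :
    (T * M * S)⁻¹ = T * M⁻¹ * S := by
  rw [mul_inv_rev, mul_inv_rev, inv_eq_left_inv hTS, inv_eq_left_inv hST, Matrix.mul_assoc]

theorem conj_inv_one_sub_smul_conj_mul_sub (hST : S * T = 1) (hTS : T * S = 1) (α : R)
    (P W : Matrix ι ι R) :
    S * (1 - α • (T * P * S))⁻¹ * (T * P * S - W) * T = (1 - α • P)⁻¹ * (P - S * W * T) := by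
  rw [one_sub_smul_conj hTS, inv_conj hST hTS]
  calc _ = S * T * (1 - α • P)⁻¹ * (S * T * P * (S * T) - S * W * T) := by
        simp only [Matrix.mul_sub, Matrix.sub_mul, Matrix.mul_assoc]
    _ = _ := by rw [hST, Matrix.one_mul, Matrix.one_mul, Matrix.mul_one]

end Conj

end Matrix

noncomputable def pageRank {R : Type*} [CommRing R] (P : Matrix ι ι R) (α : R) (v : ι → R) :
    ι → R :=
  (1 - α) • ((1 - α • P)⁻¹ *ᵥ v)

theorem pageRank_sub_eq_of_mulVec_eq_self {R : Type*} [CommRing R] {P : Matrix ι ι R} {α : R}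
    (hP : IsUnit (1 - α • P)) {x : ι → R} (hx : P *ᵥ x = x) (v : ι → R) :
    pageRank P α v - (α • x + (1 - α) • v) =
      (α * (1 - α)) • ((1 - α • P)⁻¹ *ᵥ (P *ᵥ v - x)) := by
  have hcancel : α • x + (1 - α) • v =
      (1 - α • P)⁻¹ *ᵥ ((1 - α • P) *ᵥ (α • x + (1 - α) • v)) := by
    rw [mulVec_mulVec, nonsing_inv_mul _ ((isUnit_iff_isUnit_det _).mp hP), one_mulVec]
  rw [pageRank, hcancel, ← mulVec_smul, ← mulVec_sub, ← mulVec_smul]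
  congr 1
  simp only [sub_mulVec, one_mulVec, smul_mulVec, mulVec_add, mulVec_smul, hx]
  module

namespace Matrix

variable {d : ι → ℝ}

theorem mul_diagonal_inv_mem_colStochastic {A : Matrix ι ι ℝ} (hA : ∀ i j, 0 ≤ A i j)
    (hcol : ∀ j, ∑ i, A i j = d j) (hd : ∀ j, 0 < d j) :
    A * diagonal (fun j => (d j)⁻¹) ∈ colStochastic ℝ ι := by
  refine mem_colStochastic_iff_sum.2 ⟨fun i j => ?_, fun j => ?_⟩
  · rw [mul_diagonal]
    exact mul_nonneg (hA i j) (inv_nonneg.2 (hd j).le)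
  · simp_rw [mul_diagonal, ← sum_mul, hcol, mul_inv_cancel₀ (hd j).ne']

theorem mul_diagonal_inv_mulVec_self {A : Matrix ι ι ℝ} (hrow : ∀ i, d i = ∑ j, A i j)
    (hd : ∀ i, d i ≠ 0) : (A * diagonal (fun j => (d j)⁻¹)) *ᵥ d = d := by
  have h : diagonal (fun j => (d j)⁻¹) *ᵥ d = 1 := by
    ext j
    rw [mulVec_diagonal, inv_mul_cancel₀ (hd j), Pi.one_apply]
  ext i
  rw [← mulVec_mulVec, h, hrow]
  simp only [mulVec, dotProduct, Pi.one_apply, mul_one]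

theorem diagonal_mul_diagonal_inv {w : ι → ℝ} (hw : ∀ i, w i ≠ 0) :
    diagonal w * diagonal (fun i => (w i)⁻¹) = 1 := by
  rw [diagonal_mul_diagonal, ← diagonal_one]
  exact congrArg diagonal (funext fun i => mul_inv_cancel₀ (hw i))

theorem diagonal_inv_sqrt_mul_mul_diagonal_inv_sqrt (A : Matrix ι ι ℝ) :
    diagonal (fun i => (√(d i))⁻¹) * A * diagonal (fun i => (√(d i))⁻¹) =
      diagonal (fun i => (√(d i))⁻¹) * (A * diagonal (fun i => (d i)⁻¹)) *
        diagonal (fun i => √(d i)) := by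
  simp only [Matrix.mul_assoc, diagonal_mul_diagonal, inv_mul_eq_div, Real.sqrt_div_self]

theorem diagonal_sqrt_mul_vecMulVec_mul_diagonal_inv_sqrt (hd : ∀ i, 0 < d i)
    {c : ℝ} (hc : 0 ≤ c) :
    diagonal (fun i => √(d i)) * vecMulVec (fun i => √(d i) / √c) (fun i => √(d i) / √c) *
        diagonal (fun i => (√(d i))⁻¹) = c⁻¹ • vecMulVec d 1 := by
  ext i j
  have hj : √(d j) ≠ 0 := (Real.sqrt_pos.2 (hd j)).ne'
  simp only [mul_diagonal, diagonal_mul, vecMulVec_apply, smul_apply, smul_eq_mul, Pi.one_apply]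
  field_simp
  rw [Real.sq_sqrt (hd i).le, Real.sq_sqrt hc]

end Matrix

theorem pagerank_error_exact_representation_general
    (n : ℕ)
    (A : Matrix (Fin n) (Fin n) ℝ) (hAsymm : A.IsSymm) (hA0 : ∀ i j, 0 ≤ A i j)
    (d : Fin n → ℝ) (hd : ∀ i, d i = ∑ j, A i j) (hdpos : ∀ i, 0 < d i)
    (α : ℝ) (hα : α ∈ Set.Ioo (0 : ℝ) 1)
    (v : Fin n → ℝ) (hv1 : ∑ i, v i = 1)
    (P : Matrix (Fin n) (Fin n) ℝ)
    (hP : P = A * Matrix.diagonal (fun i => (d i)⁻¹))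
    (Q : Matrix (Fin n) (Fin n) ℝ)
    (hQ : Q = Matrix.diagonal (fun i => (Real.sqrt (d i))⁻¹) * A *
      Matrix.diagonal (fun i => (Real.sqrt (d i))⁻¹))
    (u₁ : Fin n → ℝ)
    (hu₁ : u₁ = fun i => Real.sqrt (d i) / Real.sqrt (∑ j, d j))
    (π : Fin n → ℝ) (hπ : π = (1 - α) • ((1 - α • P)⁻¹ *ᵥ v))
    (πbar : Fin n → ℝ)
    (hπbar : πbar = fun i => α * d i / (∑ j, d j) + (1 - α) * v i) :
    IsUnit (1 - α • Q) ∧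
      π - πbar =
        (α * (1 - α)) •
          ((Matrix.diagonal (fun i => Real.sqrt (d i)) * (1 - α • Q)⁻¹ *
              (Q - Matrix.vecMulVec u₁ u₁) *
              Matrix.diagonal (fun i => (Real.sqrt (d i))⁻¹)) *ᵥ v) := by
  set vol := ∑ j, d j
  have hsqrt : ∀ i, √(d i) ≠ 0 := fun i => (Real.sqrt_pos.2 (hdpos i)).ne'
  have hST := diagonal_mul_diagonal_inv hsqrt
  have hTS := diagonal_mul_diagonal_inv fun i => inv_ne_zero (hsqrt i)
  simp only [inv_inv] at hTS
  have hNP : IsUnit (1 - α • P) := by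
    have hcol : ∀ j, ∑ i, A i j = d j := fun j => by simp_rw [hd j, hAsymm.apply]
    exact isUnit_one_sub_smul_of_mem_colStochastic
      (hP ▸ mul_diagonal_inv_mem_colStochastic hA0 hcol hdpos)
      (abs_lt.2 ⟨by linarith [hα.1], hα.2⟩)
  have hPd : P *ᵥ (vol⁻¹ • d) = vol⁻¹ • d := by
    rw [mulVec_smul, hP, mul_diagonal_inv_mulVec_self hd fun i => (hdpos i).ne']
  have hπbar' : πbar = α • (vol⁻¹ • d) + (1 - α) • v := by
    ext i
    simp only [hπbar, Pi.add_apply, Pi.smul_apply, smul_eq_mul]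
    ring
  rw [hQ, diagonal_inv_sqrt_mul_mul_diagonal_inv_sqrt, ← hP]
  refine ⟨one_sub_smul_conj hTS α P ▸ isUnit_conj hST hTS hNP, ?_⟩
  rw [show π = pageRank P α v from hπ, hπbar', pageRank_sub_eq_of_mulVec_eq_self hNP hPd,
    conj_inv_one_sub_smul_conj_mul_sub hST hTS, hu₁,
    diagonal_sqrt_mul_vecMulVec_mul_diagonal_inv_sqrt hdpos (sum_nonneg fun i _ => (hdpos i).le),
    ← mulVec_mulVec, sub_mulVec, smul_mulVec, vecMulVec_mulVec, one_dotProduct, hv1,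
    MulOpposite.op_one, one_smul]

/-- exact representation of the PageRank approximation error:
`π − π̄ = α(1−α) · D^{1/2}(I − αQ)^{-1}(Q − u₁u₁ᵀ)D^{-1/2} v`, with `I − αQ` invertible. -/
theorem pagerank_error_exact_representation
    (n : ℕ) [NeZero n]
    (A : Matrix (Fin n) (Fin n) ℝ) (hAsymm : A.IsSymm) (hA0 : ∀ i j, 0 ≤ A i j)
    (d : Fin n → ℝ) (hd : ∀ i, d i = ∑ j, A i j) (hdpos : ∀ i, 0 < d i)
    (α : ℝ) (hα : α ∈ Set.Ioo (0 : ℝ) 1)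
    (v : Fin n → ℝ) (hv1 : ∑ i, v i = 1)
    (P : Matrix (Fin n) (Fin n) ℝ)
    (hP : P = A * Matrix.diagonal (fun i => (d i)⁻¹))
    (Q : Matrix (Fin n) (Fin n) ℝ)
    (hQ : Q = Matrix.diagonal (fun i => (Real.sqrt (d i))⁻¹) * A *
      Matrix.diagonal (fun i => (Real.sqrt (d i))⁻¹))
    (u₁ : Fin n → ℝ)
    (hu₁ : u₁ = fun i => Real.sqrt (d i) / Real.sqrt (∑ j, d j))
    (π : Fin n → ℝ) (hπ : π = (1 - α) • ((1 - α • P)⁻¹ *ᵥ v))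
    (πbar : Fin n → ℝ)
    (hπbar : πbar = fun i => α * d i / (∑ j, d j) + (1 - α) * v i) :
    IsUnit (1 - α • Q) ∧
      π - πbar =
        (α * (1 - α)) •
          ((Matrix.diagonal (fun i => Real.sqrt (d i)) * (1 - α • Q)⁻¹ *
              (Q - Matrix.vecMulVec u₁ u₁) *
              Matrix.diagonal (fun i => (Real.sqrt (d i))⁻¹)) *ᵥ v) :=
  pagerank_error_exact_representation_general n A hAsymm hA0 d hd hdpos α hα v hv1 P hP Q hQ u₁ hu₁
    π hπ πbar hπbar
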